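/- Let Ω ⊆ ℝ³ be open, ε > 0 and u ∈ C²(Ω), and let ξ := (ε/2)|∇u|² − W(u)/ε (so ∇ξ = ε(∇²u)∇u − (W′(u)/ε)∇u). Then ∫_Ω |∇ξ| dx ≤ 3^{1/4} · ( (1/ε) ∫_Ω | ε∇²u − (W′(u)/ε) ν_u ⊗ ν_u |² dx )^{1/2} · ( ∫_Ω ε|∇u|² dx )^{1/2}, whenever the two integrals on the right-hand side are finite. -/

import Mathlib

open MeasureTheory

/-- The double-well potential `W(s) = (1 − s²)²/4`. -/
noncomputable def W (s : ℝ) : ℝ := (1 - s ^ 2) ^ 2 / 4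

/-- Its derivative `W′(s) = −s(1 − s²)`. -/
noncomputable def W' (s : ℝ) : ℝ := -s * (1 - s ^ 2)

/-- `i`-th partial derivative of a function on `ℝ³`. -/
noncomputable def pd (u : (Fin 3 → ℝ) → ℝ) (i : Fin 3) (x : Fin 3 → ℝ) : ℝ :=
  fderiv ℝ u x (Pi.single i 1)

/-- Hessian entry `∂_i ∂_j u`. -/
noncomputable def hess (u : (Fin 3 → ℝ) → ℝ) (i j : Fin 3) (x : Fin 3 → ℝ) : ℝ :=
  pd (pd u j) i x

/-- The unit vector field `ν_u = ∇u/|∇u|` on `{∇u ≠ 0}`, equal to `e₃` on `{∇u = 0}`. -/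
noncomputable def nu (u : (Fin 3 → ℝ) → ℝ) (x : Fin 3 → ℝ) : Fin 3 → ℝ :=
  if (∑ i, (pd u i x) ^ 2) = 0 then (fun i => if i = 2 then 1 else 0)
  else fun i => pd u i x / Real.sqrt (∑ j, (pd u j x) ^ 2)

/-- The discrepancy density `ξ = (ε/2)|∇u|² − W(u)/ε`. -/
noncomputable def xi (ε : ℝ) (u : (Fin 3 → ℝ) → ℝ) (x : Fin 3 → ℝ) : ℝ :=
  ε / 2 * (∑ i, (pd u i x) ^ 2) - W (u x) / ε

/-!
Wherever `∇u ≠ 0` the matrix `ν_u ⊗ ν_u` fixes `∇u`, so `∇ξ = (ε∇²u − (W′(u)/ε) ν_u ⊗ ν_u) ∇u`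
at every point of `Ω` (both sides vanish where `∇u = 0`). Cauchy–Schwarz for this matrix-vector
product gives `|∇ξ| ≤ |ε∇²u − (W′(u)/ε) ν_u ⊗ ν_u| |∇u|` pointwise, and Cauchy–Schwarz in `L²(Ω)`,
after splitting `|∇u| = ε^{-1/2} · (ε|∇u|²)^{1/2}`, gives the inequality with constant `1 ≤ 3^{1/4}`.
-/

namespace MeasureTheory

variable {α : Type*} [MeasurableSpace α] {μ : Measure α} {f g : α → ℝ}

lemma Integrable.sqrt_mul (hf : Integrable f μ) (hg : Integrable g μ)
    (hf₀ : 0 ≤ᵐ[μ] f) (hg₀ : 0 ≤ᵐ[μ] g) : Integrable (fun x => √(f x * g x)) μ := by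
  refine ((hf.add hg).div_const 2).mono'
    (Real.continuous_sqrt.comp_aestronglyMeasurable (hf.1.mul hg.1)) ?_
  filter_upwards [hf₀, hg₀] with x hfx hgx
  rw [Real.norm_of_nonneg (Real.sqrt_nonneg _), Real.sqrt_le_iff]
  simp only [Pi.add_apply, Pi.zero_apply] at *
  exact ⟨by positivity, by nlinarith [sq_nonneg (f x - g x)]⟩

lemma integral_sqrt_mul_le (hf : Integrable f μ) (hg : Integrable g μ)
    (hf₀ : 0 ≤ᵐ[μ] f) (hg₀ : 0 ≤ᵐ[μ] g) :
    ∫ x, √(f x * g x) ∂μ ≤ √(∫ x, f x ∂μ) * √(∫ x, g x ∂μ) := by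
  have hL2 : ∀ {h : α → ℝ}, Integrable h μ → 0 ≤ᵐ[μ] h →
      MemLp (fun x => √(h x)) (ENNReal.ofReal 2) μ := fun hh hh₀ => by
    rw [ENNReal.ofReal_ofNat, memLp_two_iff_integrable_sq
      (Real.continuous_sqrt.comp_aestronglyMeasurable hh.1)]
    refine hh.congr ?_
    filter_upwards [hh₀] with x hx using (Real.sq_sqrt hx).symm
  have holder := integral_mul_le_Lp_mul_Lq_of_nonneg Real.HolderConjugate.two_two
    (.of_forall fun x => Real.sqrt_nonneg (f x)) (.of_forall fun x => Real.sqrt_nonneg (g x))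
    (hL2 hf hf₀) (hL2 hg hg₀)
  have hsq : ∀ {h : α → ℝ}, 0 ≤ᵐ[μ] h → ∫ x, √(h x) ^ (2 : ℝ) ∂μ = ∫ x, h x ∂μ := fun hh₀ =>
    integral_congr_ae (by filter_upwards [hh₀] with x hx using Real.rpow_two _ ▸ Real.sq_sqrt hx)
  rw [hsq hf₀, hsq hg₀, ← Real.sqrt_eq_rpow, ← Real.sqrt_eq_rpow] at holder
  refine le_of_eq_of_le (integral_congr_ae ?_) holder
  filter_upwards [hf₀] with x hx using Real.sqrt_mul hx _

end MeasureTheory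

lemma hasDerivAt_W (s : ℝ) : HasDerivAt W (W' s) s := by
  have h := (((hasDerivAt_pow 2 s).const_sub 1).pow 2).div_const 4
  exact h.congr_deriv (by simp only [W']; ring)

lemma sum_sq_mulVec_le {ι κ : Type*} [Fintype ι] [Fintype κ] (A : ι → κ → ℝ) (v : κ → ℝ) :
    ∑ i, (∑ j, A i j * v j) ^ 2 ≤ (∑ i, ∑ j, A i j ^ 2) * ∑ j, v j ^ 2 := by
  rw [Finset.sum_mul]
  exact Finset.sum_le_sum fun i _ => Finset.sum_mul_sq_le_sq_mul_sq _ _ _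

section Discrepancy

variable {u : (Fin 3 → ℝ) → ℝ} {x : Fin 3 → ℝ}

lemma hasFDerivAt_pd (hu : ContDiffAt ℝ 2 u x) (j : Fin 3) :
    HasFDerivAt (pd u j) (fderiv ℝ (pd u j) x) x :=
  (((hu.fderiv_right le_rfl).differentiableAt one_ne_zero).clm_apply
    (differentiableAt_const _)).hasFDerivAt

lemma pd_xi (hu : ContDiffAt ℝ 2 u x) (ε : ℝ) (i : Fin 3) :
    pd (xi ε u) i x = ε * ∑ j, hess u i j x * pd u j x - W' (u x) / ε * pd u i x := by
  have hsq := HasFDerivAt.fun_sum fun j (_ : j ∈ Finset.univ) => (hasFDerivAt_pd hu j).pow 2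
  have hW := (hasDerivAt_W (u x)).comp_hasFDerivAt x
    (hu.differentiableAt two_ne_zero).hasFDerivAt
  have hxi := (hsq.const_mul (ε / 2)).sub (hW.mul_const ε⁻¹)
  have hfun : xi ε u = (fun y => ε / 2 * ∑ j, pd u j y ^ 2) - fun y => (W ∘ u) y * ε⁻¹ := rfl
  rw [pd, hfun, hxi.fderiv]
  simp only [sub_apply, smul_apply, sum_apply, smul_eq_mul, nsmul_eq_mul, Finset.mul_sum]
  congr 1
  · exact Finset.sum_congr rfl fun j _ => by simp only [hess, pd]; ring
  · simp only [pd]; ring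

lemma nu_mul_sum_nu_mul_pd (i : Fin 3) :
    nu u x i * ∑ j, nu u x j * pd u j x = pd u i x := by
  by_cases h : ∑ j, pd u j x ^ 2 = 0
  · have hpd : ∀ j, pd u j x = 0 := fun j =>
      pow_eq_zero_iff two_ne_zero |>.1 <|
        (Finset.sum_eq_zero_iff_of_nonneg fun k _ => sq_nonneg _).1 h j (Finset.mem_univ j)
    simp [hpd]
  · have hpos : 0 < ∑ j, pd u j x ^ 2 := lt_of_le_of_ne (by positivity) (Ne.symm h)
    simp only [nu, if_neg h]
    calc pd u i x / √(∑ k, pd u k x ^ 2) * ∑ j, pd u j x / √(∑ k, pd u k x ^ 2) * pd u j x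
        = pd u i x / √(∑ k, pd u k x ^ 2) ^ 2 * ∑ j, pd u j x ^ 2 := by
          rw [Finset.mul_sum, Finset.mul_sum]
          exact Finset.sum_congr rfl fun j _ => by ring
      _ = pd u i x := by
          rw [Real.sq_sqrt hpos.le, div_mul_cancel₀ _ h]

lemma pd_xi_eq_sum (hu : ContDiffAt ℝ 2 u x) (ε : ℝ) (i : Fin 3) :
    pd (xi ε u) i x
      = ∑ j, (ε * hess u i j x - W' (u x) / ε * nu u x i * nu u x j) * pd u j x := by
  simp only [pd_xi hu, sub_mul, Finset.sum_sub_distrib, ← Finset.mul_sum, mul_assoc,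
    nu_mul_sum_nu_mul_pd]

lemma sqrt_sum_sq_pd_xi_le (hu : ContDiffAt ℝ 2 u x) (ε : ℝ) :
    √(∑ i, pd (xi ε u) i x ^ 2)
      ≤ √((∑ i, ∑ j, (ε * hess u i j x - W' (u x) / ε * nu u x i * nu u x j) ^ 2)
          * ∑ i, pd u i x ^ 2) :=
  Real.sqrt_le_sqrt (by simpa only [pd_xi_eq_sum hu] using sum_sq_mulVec_le _ _)

end Discrepancy

/-- `∫_Ω |∇ξ| dx ≤ 3^{1/4} · ((1/ε)∫_Ω |ε∇²u − (W′(u)/ε) ν_u⊗ν_u|² dx)^{1/2}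
· (∫_Ω ε|∇u|² dx)^{1/2}`, whenever the two integrals on the right are finite. -/
theorem stmt_11 (Ω : Set (Fin 3 → ℝ)) (hΩ : IsOpen Ω)
    (u : (Fin 3 → ℝ) → ℝ) (hu : ContDiffOn ℝ 2 u Ω) (ε : ℝ) (hε : 0 < ε)
    (h₁ : IntegrableOn
      (fun x => ∑ i, ∑ j,
        (ε * hess u i j x - (W' (u x) / ε) * nu u x i * nu u x j) ^ 2) Ω volume)
    (h₂ : IntegrableOn (fun x => ε * ∑ i, (pd u i x) ^ 2) Ω volume) :
    (∫ x in Ω, Real.sqrt (∑ i, (pd (xi ε u) i x) ^ 2))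
      ≤ (3:ℝ) ^ ((1:ℝ)/4)
        * Real.sqrt ((1/ε) * ∫ x in Ω, ∑ i, ∑ j,
            (ε * hess u i j x - (W' (u x) / ε) * nu u x i * nu u x j) ^ 2)
        * Real.sqrt (∫ x in Ω, ε * ∑ i, (pd u i x) ^ 2) := by
  set F := fun x => ∑ i, ∑ j, (ε * hess u i j x - (W' (u x) / ε) * nu u x i * nu u x j) ^ 2
  set G := fun x => ε * ∑ i, (pd u i x) ^ 2
  have hF : Integrable (fun x => 1 / ε * F x) (volume.restrict Ω) := h₁.const_mul _
  have hF₀ : 0 ≤ᵐ[volume.restrict Ω] fun x => 1 / ε * F x := .of_forall fun x => by positivity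
  have hG₀ : 0 ≤ᵐ[volume.restrict Ω] G := .of_forall fun x => by positivity
  have hpt : ∀ x ∈ Ω, √(∑ i, pd (xi ε u) i x ^ 2) ≤ √(1 / ε * F x * G x) := fun x hx => by
    have hscale : 1 / ε * F x * G x = F x * ∑ i, pd u i x ^ 2 := by simp only [G]; field_simp
    exact hscale ▸ sqrt_sum_sq_pd_xi_le (hu.contDiffAt (hΩ.mem_nhds hx)) ε
  calc ∫ x in Ω, √(∑ i, pd (xi ε u) i x ^ 2)
      ≤ ∫ x in Ω, √(1 / ε * F x * G x) :=
        integral_mono_of_nonneg (.of_forall fun x => Real.sqrt_nonneg _)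
          (hF.sqrt_mul h₂ hF₀ hG₀) (ae_restrict_of_forall_mem hΩ.measurableSet hpt)
    _ ≤ √(∫ x in Ω, 1 / ε * F x) * √(∫ x in Ω, G x) := integral_sqrt_mul_le hF h₂ hF₀ hG₀
    _ = √(1 / ε * ∫ x in Ω, F x) * √(∫ x in Ω, G x) := by rw [integral_const_mul]
    _ ≤ 3 ^ (1 / 4 : ℝ) * √(1 / ε * ∫ x in Ω, F x) * √(∫ x in Ω, G x) := by
        rw [mul_assoc]
        exact le_mul_of_one_le_left (by positivity) (Real.one_le_rpow (by norm_num) (by norm_num))
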